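/- arXiv:1912.06419 — 5 statements merged into one kernel-verified Lean document; each statement's English description precedes it below -/
import Mathlib

section
/- For every 1 ≤ i ≤ k and every N ≥ 2, the optimal locations satisfy ℓ_N(i) ∈ { ℓ_{N-1}(i), ℓ_{N-1}(i) + 1 }; equivalently, counting positions so that the total number of spaces is N, the optimal location for x_i among N spaces differs from that among N-1 spaces by at most one: a_{N,r} < x_i for every r ≤ ℓ_{N-1}(i) - 2 and a_{N,r} > x_i for every ℓ_{N-1}(i) + 1 ≤ r ≤ N - 1. -/
/-!
Writing `a_{N+1,r}` as the mean of `x_j` clamped to `[a_{N,r-1}, a_{N,r}]`, the thresholds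
interlace: `a_{N,r-1} < a_{N+1,r} ≤ a_{N,r}`. The upper bound is immediate. The lower bound is
strict because the largest value `x_k` lies above `a_{N,r-1}` and is attained with positive
probability, provided `a_{N,r-1} < a_{N,r}`; this strict monotonicity of `a_{N,·}` is itself a
consequence of interlacing one level down, so both are proved together by induction on `N`.
Interlacing means that adding a space moves every threshold by at most one slot relative to
`x_i`, which is the statement about `ℓ_N(i)`.
-/

open Finset

/-- The recursively defined thresholds `a_{N,r}` of Derman–Lieberman–Ross:
`a_{N,0} = -∞`, `a_{N,N} = +∞` (indeed `a_{N,r} = +∞` for `r ≥ N`), and for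
`N ≥ 2`, `1 ≤ r ≤ N-1`,
`a_{N,r} = Σ_{j=1}^k p_j · min(max(x_j, a_{N-1,r-1}), a_{N-1,r})`
(the conventions `max(x,-∞) = x`, `min(x,+∞) = x` hold automatically in `EReal`). -/
noncomputable def aT (k : ℕ) (x p : ℕ → ℝ) : ℕ → ℕ → EReal
  | 0, _ => ⊥
  | N + 1, r =>
    if r = 0 then ⊥
    else if N + 1 ≤ r then ⊤
    else ∑ j ∈ Finset.Icc 1 k,
      (p j : EReal) * min (max (x j : EReal) (aT k x p N (r - 1))) (aT k x p N r)

/-- `ℓ_n(i)`: the optimal location for placing the value `x_i` when `n` empty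
spaces remain, i.e. the least `r ∈ {1,…,n}` with `x_i ≤ a_{n,r}`. -/
noncomputable def ell (k : ℕ) (x p : ℕ → ℝ) (n i : ℕ) : ℕ :=
  sInf {r : ℕ | 1 ≤ r ∧ r ≤ n ∧ (x i : EReal) ≤ aT k x p n r}

theorem EReal.coe_finset_sum {ι : Type*} (s : Finset ι) (f : ι → ℝ) :
    ((∑ j ∈ s, f j : ℝ) : EReal) = ∑ j ∈ s, (f j : EReal) :=
  map_sum (⟨⟨Real.toEReal, EReal.coe_zero⟩, EReal.coe_add⟩ : ℝ →+ EReal) f s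

section WeightedSum

variable {ι : Type*} {s : Finset ι} {p : ι → ℝ}

theorem sum_coe_mul_le_sum_coe_mul (hp : ∀ j ∈ s, 0 ≤ p j) {f g : ι → EReal}
    (hfg : ∀ j ∈ s, f j ≤ g j) :
    ∑ j ∈ s, (p j : EReal) * f j ≤ ∑ j ∈ s, (p j : EReal) * g j :=
  sum_le_sum fun j hj => mul_le_mul_of_nonneg_left (hfg j hj) (EReal.coe_nonneg.2 (hp j hj))

theorem sum_coe_mul_const (hsum : ∑ j ∈ s, p j = 1) (c : ℝ) :
    ∑ j ∈ s, (p j : EReal) * c = c := by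
  simp only [← EReal.coe_mul, ← EReal.coe_finset_sum, ← sum_mul, hsum, one_mul]

theorem sum_coe_mul_eq_coe_sum {f : ι → EReal} (hf : ∀ j ∈ s, f j ≠ ⊤ ∧ f j ≠ ⊥) :
    ∑ j ∈ s, (p j : EReal) * f j = ((∑ j ∈ s, p j * (f j).toReal : ℝ) : EReal) := by
  rw [EReal.coe_finset_sum]
  exact sum_congr rfl fun j hj => by rw [EReal.coe_mul, EReal.coe_toReal (hf j hj).1 (hf j hj).2]

theorem sum_coe_mul_lt_sum_coe_mul (hp : ∀ j ∈ s, 0 ≤ p j) {f g : ι → EReal}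
    (hf : ∀ j ∈ s, f j ≠ ⊥) (hg : ∀ j ∈ s, g j ≠ ⊤) (hfg : ∀ j ∈ s, f j ≤ g j)
    {j₀ : ι} (hj₀ : j₀ ∈ s) (hp₀ : 0 < p j₀) (hlt : f j₀ < g j₀) :
    ∑ j ∈ s, (p j : EReal) * f j < ∑ j ∈ s, (p j : EReal) * g j := by
  have hf' : ∀ j ∈ s, f j ≠ ⊤ ∧ f j ≠ ⊥ := fun j hj =>
    ⟨ne_top_of_le_ne_top (hg j hj) (hfg j hj), hf j hj⟩
  have hg' : ∀ j ∈ s, g j ≠ ⊤ ∧ g j ≠ ⊥ := fun j hj =>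
    ⟨hg j hj, ne_bot_of_le_ne_bot (hf j hj) (hfg j hj)⟩
  have toReal_le : ∀ j ∈ s, (f j).toReal ≤ (g j).toReal := fun j hj =>
    EReal.toReal_le_toReal (hfg j hj) (hf j hj) (hg j hj)
  have toReal_lt : (f j₀).toReal < (g j₀).toReal := by
    rwa [← EReal.coe_lt_coe_iff, EReal.coe_toReal (hf' j₀ hj₀).1 (hf' j₀ hj₀).2,
      EReal.coe_toReal (hg' j₀ hj₀).1 (hg' j₀ hj₀).2]
  rw [sum_coe_mul_eq_coe_sum hf', sum_coe_mul_eq_coe_sum hg', EReal.coe_lt_coe_iff]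
  exact sum_lt_sum (fun j hj => mul_le_mul_of_nonneg_left (toReal_le j hj) (hp j hj))
    ⟨j₀, hj₀, mul_lt_mul_of_pos_left toReal_lt hp₀⟩

end WeightedSum

structure IsDLRData (k : ℕ) (x p : ℕ → ℝ) : Prop where
  x_one_le : ∀ j ∈ Icc 1 k, x 1 ≤ x j
  le_x_k : ∀ j ∈ Icc 1 k, x j ≤ x k
  x_one_lt_x_k : x 1 < x k
  pos : ∀ j ∈ Icc 1 k, 0 < p j
  sum_eq_one : ∑ j ∈ Icc 1 k, p j = 1

theorem IsDLRData.of_strictMono {k : ℕ} {x p : ℕ → ℝ} (hk : 2 ≤ k)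
    (hx : ∀ i j : ℕ, 1 ≤ i → i < j → j ≤ k → x i < x j)
    (hp : ∀ j : ℕ, 1 ≤ j → j ≤ k → 0 < p j) (hsum : ∑ j ∈ Icc 1 k, p j = 1) :
    IsDLRData k x p where
  x_one_le j hj := by
    obtain ⟨h1, hjk⟩ := mem_Icc.1 hj
    rcases h1.eq_or_lt with rfl | h1
    exacts [le_rfl, (hx 1 j le_rfl h1 hjk).le]
  le_x_k j hj := by
    obtain ⟨h1, hjk⟩ := mem_Icc.1 hj
    rcases hjk.eq_or_lt with rfl | hjk
    exacts [le_rfl, (hx j k h1 hjk le_rfl).le]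
  x_one_lt_x_k := hx 1 k le_rfl (by omega) le_rfl
  pos j hj := hp j (mem_Icc.1 hj).1 (mem_Icc.1 hj).2
  sum_eq_one := hsum

noncomputable def clampAT (k : ℕ) (x p : ℕ → ℝ) (N r j : ℕ) : EReal :=
  min (max (x j : EReal) (aT k x p N (r - 1))) (aT k x p N r)

section Thresholds

variable {k : ℕ} {x p : ℕ → ℝ}

theorem aT_zero_right (N : ℕ) : aT k x p N 0 = ⊥ := by
  cases N <;> simp [aT]

theorem aT_of_le {N r : ℕ} (hN : 1 ≤ N) (hr : N ≤ r) : aT k x p N r = ⊤ := by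
  obtain ⟨M, rfl⟩ : ∃ M, N = M + 1 := ⟨N - 1, by omega⟩
  rw [aT, if_neg (by omega), if_pos hr]

theorem aT_succ {N r : ℕ} (h1 : 1 ≤ r) (h2 : r ≤ N) :
    aT k x p (N + 1) r = ∑ j ∈ Icc 1 k, (p j : EReal) * clampAT k x p N r j := by
  rw [aT, if_neg (by omega), if_neg (by omega)]
  rfl

namespace IsDLRData

variable (h : IsDLRData k x p)
include h

theorem one_le : 1 ≤ k :=
  nonempty_Icc.1 (nonempty_of_sum_ne_zero (h.sum_eq_one ▸ one_ne_zero))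

theorem x_one_le_aT {N r : ℕ} (h1 : 1 ≤ r) (hN : 1 ≤ N) : (x 1 : EReal) ≤ aT k x p N r := by
  induction N generalizing r with
  | zero => omega
  | succ N ih =>
    rcases le_or_gt (N + 1) r with hr | hr
    · exact (aT_of_le (by omega) hr).symm ▸ le_top
    rw [aT_succ h1 (by omega), ← sum_coe_mul_const h.sum_eq_one (x 1)]
    refine sum_coe_mul_le_sum_coe_mul (fun j hj => (h.pos j hj).le) fun j hj => ?_
    exact (le_min (EReal.coe_le_coe_iff.2 (h.x_one_le j hj)) (ih h1 (by omega))).trans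
      (min_le_min_right _ (le_max_left _ _))

theorem bot_lt_aT {N r : ℕ} (h1 : 1 ≤ r) (hN : 1 ≤ N) : ⊥ < aT k x p N r :=
  (EReal.bot_lt_coe _).trans_le (h.x_one_le_aT h1 hN)

theorem clampAT_ne_bot {N r : ℕ} (h1 : 1 ≤ r) (hN : 1 ≤ N) (j : ℕ) :
    clampAT k x p N r j ≠ ⊥ :=
  (lt_min ((EReal.bot_lt_coe _).trans_le (le_max_left _ _)) (h.bot_lt_aT h1 hN)).ne'

theorem aT_lt_x_k {N r : ℕ} (hr : r < N) : aT k x p N r < x k := by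
  induction N generalizing r with
  | zero => omega
  | succ N ih =>
    rcases Nat.eq_zero_or_pos r with rfl | h1
    · exact aT_zero_right _ ▸ EReal.bot_lt_coe _
    have hk := h.one_le
    rw [aT_succ h1 (by omega), ← sum_coe_mul_const h.sum_eq_one (x k)]
    refine sum_coe_mul_lt_sum_coe_mul (fun j hj => (h.pos j hj).le)
      (fun j _ => h.clampAT_ne_bot h1 (by omega) j) (fun _ _ => EReal.coe_ne_top _)
      (fun j hj => (min_le_left _ _).trans
        (max_le (EReal.coe_le_coe_iff.2 (h.le_x_k j hj)) (ih (by omega)).le))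
      (left_mem_Icc.2 hk) (h.pos 1 (left_mem_Icc.2 hk)) ?_
    exact (min_le_left _ _).trans_lt
      (max_lt (EReal.coe_lt_coe_iff.2 h.x_one_lt_x_k) (ih (by omega)))

theorem exists_aT_eq_coe {N r : ℕ} (h1 : 1 ≤ r) (hr : r < N) : ∃ c : ℝ, aT k x p N r = c :=
  ⟨_, (EReal.coe_toReal ((h.aT_lt_x_k hr).trans (EReal.coe_lt_top _)).ne
    (h.bot_lt_aT h1 (by omega)).ne').symm⟩

theorem clampAT_ne_top {N r : ℕ} (h1 : 1 ≤ r) (hr : r ≤ N) (j : ℕ) :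
    clampAT k x p N r j ≠ ⊤ :=
  ((min_le_left _ _).trans_lt
    (max_lt (EReal.coe_lt_top _) ((h.aT_lt_x_k (by omega)).trans (EReal.coe_lt_top _)))).ne

theorem aT_mono (N : ℕ) : Monotone (aT k x p N) := by
  induction N with
  | zero => intro r s _; simp [aT]
  | succ N ih =>
    intro r s hrs
    rcases Nat.eq_zero_or_pos r with rfl | h1
    · exact aT_zero_right _ ▸ bot_le
    rcases le_or_gt (N + 1) s with hs | hs
    · exact (aT_of_le (by omega) hs).symm ▸ le_top
    rw [aT_succ h1 (by omega), aT_succ (by omega) (by omega)]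
    exact sum_coe_mul_le_sum_coe_mul (fun j hj => (h.pos j hj).le) fun j _ =>
      min_le_min (max_le_max le_rfl (ih (by omega))) (ih hrs)

theorem aT_succ_le {N r : ℕ} (h1 : 1 ≤ r) (hr : r ≤ N) : aT k x p (N + 1) r ≤ aT k x p N r := by
  rcases hr.eq_or_lt with rfl | hr
  · exact (aT_of_le (by omega) le_rfl).symm ▸ le_top
  obtain ⟨c, hc⟩ := h.exists_aT_eq_coe h1 hr
  rw [aT_succ h1 hr.le, hc, ← sum_coe_mul_const h.sum_eq_one c]
  exact sum_coe_mul_le_sum_coe_mul (fun j hj => (h.pos j hj).le) fun j _ =>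
    hc ▸ min_le_right _ _

theorem aT_pred_lt_aT_succ_of_lt {N r : ℕ} (h1 : 1 ≤ r) (hr : r ≤ N)
    (hlt : aT k x p N (r - 1) < aT k x p N r) :
    aT k x p N (r - 1) < aT k x p (N + 1) r := by
  rcases h1.eq_or_lt with rfl | h1
  · exact aT_zero_right N ▸ h.bot_lt_aT le_rfl (by omega)
  have hk := h.one_le
  obtain ⟨c, hc⟩ := h.exists_aT_eq_coe (N := N) (r := r - 1) (by omega) (by omega)
  rw [aT_succ (by omega) hr, hc, ← sum_coe_mul_const h.sum_eq_one c]
  refine sum_coe_mul_lt_sum_coe_mul (fun j hj => (h.pos j hj).le)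
    (fun _ _ => EReal.coe_ne_bot _) (fun j _ => h.clampAT_ne_top (by omega) hr j)
    (fun j _ => hc ▸ le_min (le_max_right _ _) (h.aT_mono N (Nat.sub_le r 1)))
    (right_mem_Icc.2 hk) (h.pos k (right_mem_Icc.2 hk)) ?_
  rw [clampAT, ← hc]
  exact lt_min (lt_max_of_lt_left (h.aT_lt_x_k (by omega))) hlt

theorem aT_pred_lt_aT_succ {N r : ℕ} (h1 : 1 ≤ r) (hr : r ≤ N) :
    aT k x p N (r - 1) < aT k x p (N + 1) r := by
  induction N generalizing r with
  | zero => omega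
  | succ N ih =>
    refine h.aT_pred_lt_aT_succ_of_lt h1 hr ?_
    rcases hr.eq_or_lt with rfl | hr
    · rw [aT_of_le (by omega) le_rfl]
      exact (h.aT_lt_x_k (by omega)).trans (EReal.coe_lt_top _)
    rcases h1.eq_or_lt with rfl | h1
    · exact aT_zero_right _ ▸ h.bot_lt_aT le_rfl (by omega)
    calc aT k x p (N + 1) (r - 1) ≤ aT k x p N (r - 1) := h.aT_succ_le (by omega) (by omega)
      _ < aT k x p (N + 1) r := ih (r := r) (by omega) (by omega)

end IsDLRData

end Thresholds

section Ell

variable {k : ℕ} {x p : ℕ → ℝ}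

theorem ell_spec {n : ℕ} (hn : 1 ≤ n) (i : ℕ) :
    1 ≤ ell k x p n i ∧ ell k x p n i ≤ n ∧ (x i : EReal) ≤ aT k x p n (ell k x p n i) :=
  Nat.sInf_mem (s := {r : ℕ | 1 ≤ r ∧ r ≤ n ∧ (x i : EReal) ≤ aT k x p n r})
    ⟨n, hn, le_rfl, (aT_of_le hn le_rfl).symm ▸ le_top⟩

theorem ell_le_of_le_aT {n r i : ℕ} (h1 : 1 ≤ r) (hr : r ≤ n)
    (hxi : (x i : EReal) ≤ aT k x p n r) : ell k x p n i ≤ r :=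
  Nat.sInf_le ⟨h1, hr, hxi⟩

theorem aT_lt_of_lt_ell {n r i : ℕ} (hn : 1 ≤ n) (hr : r < ell k x p n i) :
    aT k x p n r < x i := by
  rcases Nat.eq_zero_or_pos r with rfl | h1
  · exact aT_zero_right n ▸ EReal.bot_lt_coe _
  have hle_n := (ell_spec (k := k) (x := x) (p := p) hn i).2.1
  exact not_le.1 fun hle => (ell_le_of_le_aT h1 (by omega) hle).not_gt hr

end Ell

/-- For every `1 ≤ i ≤ k` and `N ≥ 2`,
`ℓ_N(i) ∈ {ℓ_{N-1}(i), ℓ_{N-1}(i) + 1}`; moreover `a_{N,r} < x_i` for every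
`r ≤ ℓ_{N-1}(i) - 2`, and `a_{N,r} > x_i` for every `ℓ_{N-1}(i) + 1 ≤ r ≤ N - 1`. -/
theorem ell_continuity (k : ℕ) (hk : 3 ≤ k) (x p : ℕ → ℝ)
    (hx : ∀ i j : ℕ, 1 ≤ i → i < j → j ≤ k → x i < x j)
    (hp : ∀ j : ℕ, 1 ≤ j → j ≤ k → 0 < p j)
    (hsum : ∑ j ∈ Finset.Icc 1 k, p j = 1) :
    ∀ i : ℕ, 1 ≤ i → i ≤ k → ∀ N : ℕ, 2 ≤ N →
      (ell k x p N i = ell k x p (N - 1) i ∨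
        ell k x p N i = ell k x p (N - 1) i + 1) ∧
      (∀ r : ℕ, r ≤ ell k x p (N - 1) i - 2 → aT k x p N r < (x i : EReal)) ∧
      (∀ r : ℕ, ell k x p (N - 1) i + 1 ≤ r → r ≤ N - 1 →
        (x i : EReal) < aT k x p N r) := by
  have h := IsDLRData.of_strictMono (by omega) hx hp hsum
  intro i _ _ N hN
  obtain ⟨M, rfl⟩ : ∃ M, N = M + 1 := ⟨N - 1, by omega⟩
  simp only [Nat.add_sub_cancel]
  obtain ⟨hL1, hLM, hxL⟩ := ell_spec (k := k) (x := x) (p := p) (n := M) (by omega) i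
  have below : ∀ r < ell k x p M i, aT k x p (M + 1) r < x i := fun r hr => by
    rcases Nat.eq_zero_or_pos r with rfl | h1
    · exact aT_zero_right _ ▸ EReal.bot_lt_coe _
    exact (h.aT_succ_le h1 (by omega)).trans_lt (aT_lt_of_lt_ell (by omega) hr)
  have above : ∀ r, ell k x p M i + 1 ≤ r → r ≤ M → (x i : EReal) < aT k x p (M + 1) r :=
    fun r hr hrM =>
      (hxL.trans (h.aT_mono M (by omega))).trans_lt (h.aT_pred_lt_aT_succ (by omega) hrM)
  have le_next : (x i : EReal) ≤ aT k x p (M + 1) (ell k x p M i + 1) := by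
    rcases hLM.eq_or_lt with hL | hL
    · exact (aT_of_le (N := M + 1) (r := ell k x p M i + 1) (by omega) (by omega)).symm ▸ le_top
    · exact (above _ le_rfl hL).le
  have hge : ell k x p M i ≤ ell k x p (M + 1) i :=
    not_lt.1 fun hlt => (below _ hlt).not_ge (ell_spec (by omega) i).2.2
  have hle : ell k x p (M + 1) i ≤ ell k x p M i + 1 :=
    ell_le_of_le_aT (by omega) (by omega) le_next
  exact ⟨by omega, fun r hr => below r (by omega), above⟩
end

section
/- Let 0 < v < b < 1 and let ℓ : ℕ → ℕ be a function with 1 ≤ ℓ(n) ≤ n for all n ≥ 1, such that limsup_{n→∞} ℓ(n)/n > b. Then there are infinitely many positive integers N such that both: (i) ℓ(N) ≥ bN + 1; and (ii) ℓ(N - t) ≤ ℓ(N) - v·t for every integer 0 ≤ t ≤ N - 1. -/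
open Filter

/-! Maximise `g m = ℓ m - v m` over `1 ≤ m ≤ n` for an `n` with `ℓ n ≥ b n + 1`. A maximiser `N`
satisfies (ii) by maximality, and (i) because `ℓ N - b N = g N - (b - v) N ≥ g n - (b - v) n`.
Since `g N ≥ g n ≥ 1 + (b - v) n` and the limsup hypothesis supplies arbitrarily large such `n`,
the values of `g` on the maximisers are unbounded, so there are infinitely many of them. -/

theorem exists_mem_Icc_le_and_isMaxOn (f : ℕ → ℝ) {n : ℕ} (hn : 1 ≤ n) :
    ∃ N ∈ Finset.Icc 1 n, f n ≤ f N ∧ IsMaxOn f (Set.Icc 1 N) N := by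
  obtain ⟨N, hN, hmax⟩ := Finset.exists_max_image (Finset.Icc 1 n) f ⟨n, by simp [hn]⟩
  refine ⟨N, hN, hmax n (by simp [hn]), fun m hm => hmax m ?_⟩
  simp only [Finset.mem_Icc] at hN ⊢
  exact ⟨hm.1, hm.2.trans hN.2⟩

theorem le_sub_mul_of_isMaxOn {f : ℕ → ℝ} {v : ℝ} {N t : ℕ} (hN : 1 ≤ N)
    (hmax : IsMaxOn (fun m => f m - v * m) (Set.Icc 1 N) N) (ht : t ≤ N - 1) :
    f (N - t) ≤ f N - v * t := by
  have h := hmax (show N - t ∈ Set.Icc 1 N by simp only [Set.mem_Icc]; omega)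
  simp only [Set.mem_ofPred_eq, Nat.cast_sub (show t ≤ N by omega)] at h
  linarith

theorem frequently_mul_add_one_le_of_lt_limsup {b : ℝ} {ℓ : ℕ → ℕ}
    (hlimsup : b < limsup (fun n : ℕ => (ℓ n : ℝ) / n) atTop) :
    ∃ᶠ n in atTop, 0 < n ∧ b * n + 1 ≤ (ℓ n : ℝ) := by
  obtain ⟨b', hbb', hb'⟩ := exists_between hlimsup
  have hcobdd : IsCoboundedUnder (· ≤ ·) atTop (fun n : ℕ => (ℓ n : ℝ) / n) :=
    isCoboundedUnder_le_of_le atTop (x := 0) fun n => by positivity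
  obtain ⟨K, hK⟩ := exists_nat_gt (1 / (b' - b))
  refine (frequently_lt_of_lt_limsup hcobdd hb').and_eventually (eventually_gt_atTop K)
    |>.mono fun n ⟨hn, hKn⟩ => ⟨by omega, ?_⟩
  have hnpos : (0 : ℝ) < n := by exact_mod_cast (Nat.zero_le K).trans_lt hKn
  have hKn' : 1 / (b' - b) < n := hK.trans (by exact_mod_cast hKn)
  rw [div_lt_iff₀ (sub_pos.mpr hbb')] at hKn'
  rw [lt_div_iff₀ hnpos] at hn
  nlinarith

theorem good_values_infinite_general (v b : ℝ) (hvb : v < b)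
    (ℓ : ℕ → ℕ)
    (hlimsup : b < Filter.limsup (fun n : ℕ => (ℓ n : ℝ) / n) Filter.atTop) :
    {N : ℕ | 0 < N ∧ b * N + 1 ≤ (ℓ N : ℝ) ∧
      ∀ t : ℕ, t ≤ N - 1 → (ℓ (N - t) : ℝ) ≤ (ℓ N : ℝ) - v * t}.Infinite := by
  set g : ℕ → ℝ := fun m => ℓ m - v * m
  intro hfin
  obtain ⟨C, hC⟩ := (hfin.image g).bddAbove
  obtain ⟨n, ⟨hn, hbn⟩, hCn⟩ := ((frequently_mul_add_one_le_of_lt_limsup hlimsup).and_eventually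
    (eventually_gt_atTop ⌈(C - 1) / (b - v)⌉₊)).exists
  obtain ⟨N, hNn, hgN, hmax⟩ := exists_mem_Icc_le_and_isMaxOn g hn
  rw [Finset.mem_Icc] at hNn
  have hbN : b * N + 1 ≤ (ℓ N : ℝ) := by
    have : (b - v) * N ≤ (b - v) * n :=
      mul_le_mul_of_nonneg_left (by exact_mod_cast hNn.2) (sub_nonneg.mpr hvb.le)
    linarith
  have hgC : g N ≤ C := hC ⟨N, ⟨hNn.1, hbN, fun t ht => le_sub_mul_of_isMaxOn hNn.1 hmax ht⟩, rfl⟩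
  have hCn' : (C - 1) / (b - v) < n := Nat.lt_of_ceil_lt hCn
  rw [div_lt_iff₀ (sub_pos.mpr hvb)] at hCn'
  linarith

/-- Let `0 < v < b < 1` and let `ℓ : ℕ → ℕ` satisfy `1 ≤ ℓ(n) ≤ n`
for all `n ≥ 1`, with `limsup ℓ(n)/n > b`.  Then there are infinitely many
positive integers `N` with (i) `ℓ(N) ≥ bN + 1`, and
(ii) `ℓ(N-t) ≤ ℓ(N) - v·t` for every integer `0 ≤ t ≤ N-1`. -/
theorem good_values_infinite (v b : ℝ) (hv : 0 < v) (hvb : v < b) (hb : b < 1)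
    (ℓ : ℕ → ℕ) (hℓ : ∀ n : ℕ, 1 ≤ n → 1 ≤ ℓ n ∧ ℓ n ≤ n)
    (hlimsup : b < Filter.limsup (fun n : ℕ => (ℓ n : ℝ) / n) Filter.atTop) :
    {N : ℕ | 0 < N ∧ b * N + 1 ≤ (ℓ N : ℝ) ∧
      ∀ t : ℕ, t ≤ N - 1 → (ℓ (N - t) : ℝ) ≤ (ℓ N : ℝ) - v * t}.Infinite :=
  good_values_infinite_general v b hvb ℓ hlimsup
end

section
/- Let 0 < a < b < 1 and set d(a,b) = log((1-b)/(1-a)) / log( a(1-b) / ((1-a)b) ). Then a < d(a,b) < b. -/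
/-- `d(a,b) = log((1-b)/(1-a)) / log( a(1-b) / ((1-a)b) )`. -/
noncomputable def dOf (a b : ℝ) : ℝ :=
  Real.log ((1 - b) / (1 - a)) / Real.log (a * (1 - b) / ((1 - a) * b))

/-!
Writing `L = log((1-b)/(1-a))` and `M = log(a(1-b)/((1-a)b))`, one has
`t M - L = t log(a/b) + (1-t) log((1-a)/(1-b))` for every `t`, an affine function of `t`
whose zero is `d(a,b) = L / M`. At `t = a` it is the Kullback–Leibler divergence of the
Bernoulli laws `B(a) ‖ B(b)`, at `t = b` minus that of `B(b) ‖ B(a)`; by Gibbs' inequality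
the first is positive and the second negative, so the zero lies strictly between `a` and `b`.
-/

open Real

lemma sub_lt_mul_sub_log {x y : ℝ} (hx : 0 < x) (hy : 0 < y) (hxy : x ≠ y) :
    x - y < x * (log x - log y) := by
  have hyx : y / x ≠ 1 := fun h => hxy ((div_eq_one_iff_eq hx.ne').mp h).symm
  have hlog : log y - log x < y / x - 1 := by
    rw [← log_div hy.ne' hx.ne']
    exact log_lt_sub_one_of_pos (div_pos hy hx) hyx
  calc x - y = -(x * (y / x - 1)) := by field_simp; ring
    _ < -(x * (log y - log x)) := by gcongr
    _ = x * (log x - log y) := by ring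

lemma bernoulli_kl_pos {p q : ℝ} (hp : 0 < p) (hp1 : p < 1) (hq : 0 < q) (hq1 : q < 1)
    (hpq : p ≠ q) :
    0 < p * (log p - log q) + (1 - p) * (log (1 - p) - log (1 - q)) := by
  have h₁ := sub_lt_mul_sub_log hp hq hpq
  have h₂ := sub_lt_mul_sub_log (sub_pos.2 hp1) (sub_pos.2 hq1) (by contrapose! hpq; linarith)
  linarith

/-- For `0 < a < b < 1` one has `a < d(a,b) < b`. -/
theorem dOf_mem_Ioo (a b : ℝ) (ha : 0 < a) (hab : a < b) (hb : b < 1) :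
    a < dOf a b ∧ dOf a b < b := by
  have hb0 : 0 < b := ha.trans hab
  have ha1 : 0 < 1 - a := by linarith
  have hb1 : 0 < 1 - b := by linarith
  have hM : log (a * (1 - b) / ((1 - a) * b)) < 0 := by
    apply log_neg (by positivity)
    rw [div_lt_one (by positivity)]
    nlinarith
  have hL_eq : log ((1 - b) / (1 - a)) = log (1 - b) - log (1 - a) :=
    log_div hb1.ne' ha1.ne'
  have hM_eq : log (a * (1 - b) / ((1 - a) * b))
      = log a + log (1 - b) - (log (1 - a) + log b) := by
    rw [log_div (by positivity) (by positivity), log_mul ha.ne' hb1.ne',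
      log_mul ha1.ne' hb0.ne']
  have hkl_ab := bernoulli_kl_pos ha (hab.trans hb) hb0 hb hab.ne
  have hkl_ba := bernoulli_kl_pos hb0 hb ha (hab.trans hb) hab.ne'
  unfold dOf
  constructor
  · rw [lt_div_iff_of_neg hM, hL_eq, hM_eq]
    linarith
  · rw [div_lt_iff_of_neg hM, hL_eq, hM_eq]
    linarith
end

section
/- Let 0 < c < p < b < 1 and define g(x) = c + (b-c)/x for x ∈ ((b-c)/(1-c), 1], so that b ≤ g(x) < 1 on this interval. Then the function Φ(x) = -x·[ g(x) log(g(x)/p) + (1-g(x)) log((1-g(x))/(1-p)) ] is nondecreasing on ((b-c)/(1-c), 1]; in particular Φ(x) ≤ Φ(1) = -D(b‖p) for all x in this interval, where D(y‖p) = y log(y/p) + (1-y) log((1-y)/(1-p)). -/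
/-- Bernoulli relative entropy `D(y‖p)`. -/
noncomputable def relEnt (y p : ℝ) : ℝ :=
  y * Real.log (y / p) + (1 - y) * Real.log ((1 - y) / (1 - p))

/-! Writing `u₁ = x g(x) = c x + (b - c)` and `u₂ = x (1 - g(x)) = (1 - c) x - (b - c)`, one has
`Φ(x) = -(u₁ log (u₁ / (p x)) + u₂ log (u₂ / ((1 - p) x)))`. Since `u₁' + u₂' = 1` and
`u₁ + u₂ = x`, the terms from differentiating the logarithms cancel, leaving
`Φ'(x) = -(c log (g / p) + (1 - c) log ((1 - g) / (1 - p)))`. For `c < p ≤ g < 1`, the bound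
`log t ≤ t - 1` makes the bracket at most `(g - p)(c - p) / (p (1 - p)) ≤ 0`. -/

open Real Set

lemma hasDerivAt_mul_log_div_const_mul {u : ℝ → ℝ} {u' x : ℝ} (q : ℝ)
    (hu : HasDerivAt u u' x) (hux : u x ≠ 0) (hx : x ≠ 0) (hq : q ≠ 0) :
    HasDerivAt (fun t => u t * log (u t / (q * t)))
      (u' * log (u x / (q * x)) + u' - u x / x) x := by
  have hquot : HasDerivAt (fun t => u t / (q * t))
      ((u' * (q * x) - u x * (q * 1)) / (q * x) ^ 2) x :=
    hu.div ((hasDerivAt_id x).const_mul q) (mul_ne_zero hq hx)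
  refine (hu.mul (hquot.log (div_ne_zero hux (mul_ne_zero hq hx)))).congr_deriv ?_
  field_simp
  ring

lemma mul_relEnt_add_div (c a p : ℝ) {x : ℝ} (hx : x ≠ 0) :
    x * relEnt (c + a / x) p = (c * x + a) * log ((c * x + a) / (p * x))
      + ((1 - c) * x - a) * log (((1 - c) * x - a) / ((1 - p) * x)) := by
  have h₁ : (c + a / x) / p = (c * x + a) / (p * x) := by field_simp
  have h₂ : (1 - (c + a / x)) / (1 - p) = ((1 - c) * x - a) / ((1 - p) * x) := by
    field_simp
    ring
  rw [relEnt, h₁, h₂]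
  field_simp
  ring

lemma hasDerivAt_mul_relEnt_add_div {c a p x : ℝ} (hp₀ : p ≠ 0) (hp₁ : p ≠ 1)
    (hx : x ≠ 0) (hy₀ : c + a / x ≠ 0) (hy₁ : c + a / x ≠ 1) :
    HasDerivAt (fun t => t * relEnt (c + a / t) p)
      (c * log ((c + a / x) / p) + (1 - c) * log ((1 - (c + a / x)) / (1 - p))) x := by
  have hu₁ : c * x + a ≠ 0 := by
    contrapose! hy₀
    field_simp
    linarith
  have hu₂ : (1 - c) * x - a ≠ 0 := by
    contrapose! hy₁
    field_simp
    linarith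
  have h₁ := hasDerivAt_mul_log_div_const_mul p
    (((hasDerivAt_id x).const_mul c).add_const a) hu₁ hx hp₀
  have h₂ := hasDerivAt_mul_log_div_const_mul (1 - p)
    (((hasDerivAt_id x).const_mul (1 - c)).sub_const a) hu₂ hx (sub_ne_zero.2 hp₁.symm)
  refine ((h₁.add h₂).congr_of_eventuallyEq ?_).congr_deriv ?_
  · filter_upwards [eventually_ne_nhds hx] with t ht using mul_relEnt_add_div c a p ht
  · have e₁ : (c * x + a) / (p * x) = (c + a / x) / p := by field_simp
    have e₂ : ((1 - c) * x - a) / ((1 - p) * x) = (1 - (c + a / x)) / (1 - p) := by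
      field_simp
      ring
    simp only [id, e₁, e₂]
    field_simp
    ring

lemma mul_log_div_add_mul_log_div_nonpos {c p y : ℝ} (hc : 0 ≤ c) (hcp : c ≤ p) (hp : 0 < p)
    (hpy : p ≤ y) (hy : y < 1) :
    c * log (y / p) + (1 - c) * log ((1 - y) / (1 - p)) ≤ 0 := by
  have hp₁ : 0 < 1 - p := by linarith
  calc c * log (y / p) + (1 - c) * log ((1 - y) / (1 - p))
      ≤ c * (y / p - 1) + (1 - c) * ((1 - y) / (1 - p) - 1) := by
        gcongr
        · exact log_le_sub_one_of_pos (div_pos (hp.trans_le hpy) hp)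
        · linarith
        · exact log_le_sub_one_of_pos (div_pos (by linarith) (by linarith))
    _ = (y - p) * (c - p) / (p * (1 - p)) := by
        field_simp
        ring
    _ ≤ 0 := div_nonpos_of_nonpos_of_nonneg
        (mul_nonpos_of_nonneg_of_nonpos (by linarith) (by linarith)) (mul_nonneg hp.le hp₁.le)

lemma add_sub_div_mem_Ico {c b x : ℝ} (hcb : c ≤ b) (hb : b < 1)
    (hx : x ∈ Ioc ((b - c) / (1 - c)) 1) : c + (b - c) / x ∈ Ico b 1 := by
  have hc : 0 < 1 - c := by linarith
  have hx₀ : 0 < x := (div_nonneg (sub_nonneg.2 hcb) hc.le).trans_lt hx.1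
  constructor
  · linarith [le_div_self (sub_nonneg.2 hcb) hx₀ hx.2]
  · rw [← lt_sub_iff_add_lt', div_lt_iff₀ hx₀, ← div_lt_iff₀' hc]
    exact hx.1

lemma monotoneOn_neg_mul_relEnt {c p b : ℝ} (hc : 0 ≤ c) (hcp : c < p) (hpb : p ≤ b)
    (hb : b < 1) :
    MonotoneOn (fun x => -(x * relEnt (c + (b - c) / x) p)) (Ioc ((b - c) / (1 - c)) 1) := by
  have hp : 0 < p := hc.trans_lt hcp
  have hpos : ∀ x ∈ Ioc ((b - c) / (1 - c)) 1, 0 < x := fun x hx =>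
    lt_of_le_of_lt (div_nonneg (by linarith) (by linarith)) hx.1
  have hbounds : ∀ x ∈ Ioc ((b - c) / (1 - c)) 1,
      p ≤ c + (b - c) / x ∧ c + (b - c) / x < 1 :=
    fun x hx => (add_sub_div_mem_Ico (by linarith) hb hx).imp_left hpb.trans
  have hderiv : ∀ x ∈ Ioc ((b - c) / (1 - c)) 1,
      HasDerivAt (fun x => -(x * relEnt (c + (b - c) / x) p))
        (-(c * log ((c + (b - c) / x) / p)
          + (1 - c) * log ((1 - (c + (b - c) / x)) / (1 - p)))) x :=
    fun x hx => (hasDerivAt_mul_relEnt_add_div hp.ne' (by linarith) (hpos x hx).ne'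
      (by linarith [hbounds x hx]) (hbounds x hx).2.ne).neg
  refine monotoneOn_of_hasDerivWithinAt_nonneg (convex_Ioc _ _)
    (fun x hx => (hderiv x hx).continuousAt.continuousWithinAt)
    (fun x hx => (hderiv x (interior_subset hx)).hasDerivWithinAt) fun x hx => ?_
  obtain ⟨hpy, hy₁⟩ := hbounds x (interior_subset hx)
  exact neg_nonneg.2 (mul_log_div_add_mul_log_div_nonpos hc hcp.le hp hpy hy₁)

/-- Let `0 < c < p < b < 1` and `g(x) = c + (b-c)/x` on the interval
`((b-c)/(1-c), 1]`, so that `b ≤ g(x) < 1` there.  Then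
`Φ(x) = -x·D(g(x)‖p)` is nondecreasing on that interval; in particular
`Φ(x) ≤ Φ(1) = -D(b‖p)` for all `x` in the interval. -/
theorem phi_monotone (c p b : ℝ) (hc : 0 < c) (hcp : c < p) (hpb : p < b) (hb : b < 1)
    (g : ℝ → ℝ) (hg : ∀ x, g x = c + (b - c) / x)
    (Φ : ℝ → ℝ) (hΦ : ∀ x, Φ x = -(x * relEnt (g x) p)) :
    (∀ x ∈ Set.Ioc ((b - c) / (1 - c)) (1 : ℝ), b ≤ g x ∧ g x < 1) ∧
    MonotoneOn Φ (Set.Ioc ((b - c) / (1 - c)) (1 : ℝ)) ∧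
    Φ 1 = -relEnt b p ∧
    (∀ x ∈ Set.Ioc ((b - c) / (1 - c)) (1 : ℝ), Φ x ≤ -relEnt b p) := by
  have hΦg : Φ = fun x => -(x * relEnt (c + (b - c) / x) p) := funext fun x => by rw [hΦ, hg]
  have hmono : MonotoneOn Φ (Ioc ((b - c) / (1 - c)) 1) :=
    hΦg ▸ monotoneOn_neg_mul_relEnt hc.le hcp hpb.le hb
  have hΦ₁ : Φ 1 = -relEnt b p := by simp [hΦ, hg]
  have h₁ : (1 : ℝ) ∈ Ioc ((b - c) / (1 - c)) 1 :=
    ⟨(div_lt_one (by linarith)).2 (by linarith), le_rfl⟩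
  exact ⟨fun x hx => hg x ▸ add_sub_div_mem_Ico (by linarith) hb hx, hmono, hΦ₁,
    fun x hx => hΦ₁ ▸ hmono hx h₁ hx.2⟩
end

section
/- Let 0 < β < v < 1. Then there exist a positive integer A and a positive integer n_0 such that for every n ≥ n_0, setting m = ⌊βn⌋ and letting (ξ_1, ..., ξ_n) be uniformly distributed over all 0-1 sequences of length n with exactly m ones, one has P[ there exists 1 ≤ t ≤ n with Σ_{s=1}^t ξ_s ≥ A + v·t ] ≤ 1/2. -/
open Finset

attribute [local instance] Classical.propDecidable

/-! Among the `C(n,m)` sequences with `m` ones, exactly `C(t,j) C(n-t,m-j)` have `j` ones among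
the first `t` entries. Fix `β < u < v`. Once `j ≥ ut`, these counts decrease in `j` at least by
the factor `q = (1-u)β/(u(1-β)) < 1`, and each is at most `C(n,m)`; hence the sequences with at
least `A + vt` ones among the first `t` entries make up at most a fraction `q^(A-1) θ^t/(1-q)` of
all, where `θ = q^(v-u) < 1`. A union bound over `t` gives the fraction
`q^(A-1)/((1-q)(1-θ))`, which is at most `1/2` once `A` is large. -/

/-- Partial sum `Σ_{s=1}^t ξ_s` of a 0-1 sequence `ξ : Fin n → Bool`
(position `s : Fin n` represents `ξ_{s+1}`). -/
def partialOnes {n : ℕ} (ξ : Fin n → Bool) (t : ℕ) : ℕ :=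
  ∑ s ∈ Finset.univ.filter (fun s : Fin n => (s : ℕ) < t), (if ξ s then 1 else 0)

def funBoolEquivFinset (α : Type*) [Fintype α] [DecidableEq α] : (α → Bool) ≃ Finset α where
  toFun ξ := {a | ξ a = true}
  invFun S a := decide (a ∈ S)
  left_inv ξ := by funext a; simp
  right_inv S := by ext a; simp

lemma card_filter_card_filter_le {α : Type*} [Fintype α] [DecidableEq α] (p : α → Prop)
    [DecidablePred p] (M j : ℕ) :
    #{S : Finset α | #S = M ∧ #(S.filter p) = j}
      ≤ (#{a | p a}).choose j * (#{a | ¬ p a}).choose (M - j) := by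
  rw [← card_powersetCard, ← card_powersetCard, ← card_product]
  refine card_le_card_of_injOn (fun S => (S.filter p, S.filter fun a => ¬ p a)) ?_ ?_
  · intro S hS
    simp only [coe_filter, mem_univ, true_and, Set.mem_ofPred_eq] at hS
    obtain ⟨hM, hj⟩ := hS
    have hsplit := card_filter_add_card_filter_not (s := S) p
    simp only [coe_product, Set.mem_prod, mem_coe, mem_powersetCard]
    refine ⟨⟨fun a ha => ?_, hj⟩, ⟨fun a ha => ?_, by omega⟩⟩ <;> simp_all
  · intro S _ T _ hST
    simp only [Prod.mk.injEq] at hST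
    rw [← filter_union_filter_not_eq p S, ← filter_union_filter_not_eq p T, hST.1, hST.2]

lemma partialOnes_eq_card {n : ℕ} (ξ : Fin n → Bool) (t : ℕ) :
    partialOnes ξ t = #((funBoolEquivFinset (Fin n) ξ).filter fun s : Fin n => (s : ℕ) < t) := by
  simp only [partialOnes, funBoolEquivFinset, Equiv.coe_fn_mk, sum_boole, filter_filter, Nat.cast_id]
  congr 1
  exact filter_congr fun s _ => and_comm

lemma partialOnes_self {n : ℕ} (ξ : Fin n → Bool) :
    partialOnes ξ n = #(funBoolEquivFinset (Fin n) ξ) := by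
  rw [partialOnes_eq_card, filter_true_of_mem fun s _ => s.isLt]

lemma partialOnes_mono {n : ℕ} (ξ : Fin n → Bool) : Monotone (partialOnes ξ) := by
  intro t₁ t₂ h
  rw [partialOnes_eq_card, partialOnes_eq_card]
  exact card_le_card (monotone_filter_right _ fun s _ hs => hs.trans_le h)

lemma card_partialOnes_self_eq (n M : ℕ) :
    #{ξ : Fin n → Bool | partialOnes ξ n = M} = n.choose M := by
  rw [card_equiv (funBoolEquivFinset (Fin n)) (t := powersetCard M univ)]
  · simp
  · simp [partialOnes_self]

lemma card_partialOnes_eq_le {n t : ℕ} (ht : t ≤ n) (M j : ℕ) :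
    #{ξ : Fin n → Bool | partialOnes ξ n = M ∧ partialOnes ξ t = j}
      ≤ t.choose j * (n - t).choose (M - j) := by
  rw [card_equiv (funBoolEquivFinset (Fin n))
    (t := {S : Finset (Fin n) | #S = M ∧ #(S.filter fun s : Fin n => (s : ℕ) < t) = j})
    (by simp only [mem_filter, mem_univ, true_and, partialOnes_self, partialOnes_eq_card,
      implies_true])]
  have hlt : #{s : Fin n | (s : ℕ) < t} = t := by simp [Fin.card_filter_val_lt, ht]
  have hge : #{s : Fin n | ¬ (s : ℕ) < t} = n - t := by
    have := card_filter_add_card_filter_not (s := (univ : Finset (Fin n))) fun s => (s : ℕ) < t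
    simp only [card_univ, Fintype.card_fin] at this
    omega
  simpa only [hlt, hge] using card_filter_card_filter_le (fun s : Fin n => (s : ℕ) < t) M j

lemma card_partialOnes_ge_le {n t : ℕ} (ht : t ≤ n) (m : ℕ) (a : ℝ) :
    #{ξ : Fin n → Bool | partialOnes ξ n = m ∧ a ≤ partialOnes ξ t}
      ≤ ∑ j ∈ Icc ⌈a⌉₊ m, t.choose j * (n - t).choose (m - j) := by
  rw [card_eq_sum_card_fiberwise (f := fun ξ => partialOnes ξ t) (t := Icc ⌈a⌉₊ m)]
  · refine sum_le_sum fun j _ => (card_le_card fun ξ hξ => ?_).trans (card_partialOnes_eq_le ht m j)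
    simp only [mem_filter, mem_univ, true_and] at hξ ⊢
    exact ⟨hξ.1.1, hξ.2⟩
  · intro ξ hξ
    simp only [coe_filter, mem_univ, true_and, Set.mem_ofPred_eq, coe_Icc, Set.mem_Icc] at hξ ⊢
    exact ⟨Nat.ceil_le.2 hξ.2, hξ.1 ▸ partialOnes_mono ξ ht⟩

lemma card_exists_partialOnes_ge_le (n m : ℕ) (a : ℕ → ℝ) :
    #{ξ : Fin n → Bool | partialOnes ξ n = m ∧ ∃ t, 1 ≤ t ∧ t ≤ n ∧ a t ≤ partialOnes ξ t}
      ≤ ∑ t ∈ Icc 1 n, ∑ j ∈ Icc ⌈a t⌉₊ m, t.choose j * (n - t).choose (m - j) := by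
  calc _ ≤ #((Icc 1 n).biUnion fun t =>
          {ξ : Fin n → Bool | partialOnes ξ n = m ∧ a t ≤ partialOnes ξ t}) := by
        refine card_le_card fun ξ hξ => ?_
        simp only [mem_filter, mem_univ, true_and, mem_biUnion, mem_Icc] at hξ ⊢
        obtain ⟨hM, t, ht1, htn, hat⟩ := hξ
        exact ⟨t, ⟨ht1, htn⟩, hM, hat⟩
    _ ≤ _ := card_biUnion_le.trans (sum_le_sum fun t ht =>
        card_partialOnes_ge_le (mem_Icc.1 ht).2 m (a t))

lemma choose_succ_mul_choose_le {t N j K : ℕ} {q : ℝ} (hq : 0 ≤ q)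
    (h : ((t : ℝ) - j) * (K + 1) ≤ q * ((j + 1) * ((N : ℝ) - K))) :
    (t.choose (j + 1) * N.choose K : ℝ) ≤ q * (t.choose j * N.choose (K + 1)) := by
  rcases le_or_gt t j with hjt | hjt
  · rw [Nat.choose_eq_zero_of_lt (Nat.lt_succ_of_le hjt)]
    simp only [Nat.cast_zero, zero_mul]
    positivity
  have hKN : K < N := by
    by_contra! hNK
    have hlhs : (0 : ℝ) < ((t : ℝ) - j) * (K + 1) :=
      mul_pos (sub_pos.2 (by exact_mod_cast hjt)) (by positivity)
    have hrhs : q * ((j + 1) * ((N : ℝ) - K)) ≤ 0 :=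
      mul_nonpos_of_nonneg_of_nonpos hq
        (mul_nonpos_of_nonneg_of_nonpos (by positivity) (sub_nonpos.2 (by exact_mod_cast hNK)))
    linarith
  have ht : (t.choose (j + 1) : ℝ) * (j + 1) = t.choose j * ((t : ℝ) - j) := by
    rw [← Nat.cast_sub hjt.le]; exact_mod_cast Nat.choose_succ_right_eq t j
  have hN : (N.choose (K + 1) : ℝ) * (K + 1) = N.choose K * ((N : ℝ) - K) := by
    rw [← Nat.cast_sub hKN.le]; exact_mod_cast Nat.choose_succ_right_eq N K
  have hpos : (0 : ℝ) < (j + 1) * ((N : ℝ) - K) :=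
    mul_pos (by positivity) (sub_pos.2 (by exact_mod_cast hKN))
  refine le_of_mul_le_mul_right ?_ hpos
  calc (t.choose (j + 1) * N.choose K : ℝ) * ((j + 1) * ((N : ℝ) - K))
      = t.choose j * N.choose (K + 1) * (((t : ℝ) - j) * (K + 1)) := by
        linear_combination (N.choose K * ((N : ℝ) - K)) * ht - t.choose j * ((t : ℝ) - j) * hN
    _ ≤ t.choose j * N.choose (K + 1) * (q * ((j + 1) * ((N : ℝ) - K))) := by gcongr
    _ = q * (t.choose j * N.choose (K + 1)) * ((j + 1) * ((N : ℝ) - K)) := by ring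

lemma choose_mul_choose_le_choose {n t j m : ℕ} (ht : t ≤ n) (hjm : j ≤ m) :
    t.choose j * (n - t).choose (m - j) ≤ n.choose m := by
  rw [← Nat.add_sub_cancel' ht, Nat.add_choose_eq, Nat.add_sub_cancel' ht]
  exact single_le_sum (f := fun ij : ℕ × ℕ => t.choose ij.1 * (n - t).choose ij.2)
    (fun _ _ => Nat.zero_le _) (a := (j, m - j)) (mem_antidiagonal.2 (Nat.add_sub_cancel' hjm))

noncomputable def decayRatio (β u : ℝ) : ℝ := (1 - u) * β / (u * (1 - β))

section decayRatio

variable {β u : ℝ} (hβ : 0 < β) (hβu : β < u) (hu : u < 1)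
include hβ hβu hu

lemma decayRatio_pos : 0 < decayRatio β u := by
  have : 0 < u := hβ.trans hβu
  unfold decayRatio
  apply div_pos <;> apply mul_pos <;> linarith

lemma decayRatio_lt_one : decayRatio β u < 1 := by
  have : 0 < u := hβ.trans hβu
  rw [decayRatio, div_lt_one (mul_pos this (by linarith))]
  nlinarith

lemma sub_mul_sub_le_decayRatio_mul {n m t j : ℝ} (ht : 0 ≤ t) (htn : t ≤ n) (hm : m ≤ β * n)
    (hj : u * t ≤ j) (hjm : j + 1 ≤ m) :
    (t - j) * (m - j) ≤ decayRatio β u * ((j + 1) * (n - t - (m - j - 1))) := by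
  have hu0 : 0 < u := hβ.trans hβu
  have hD : 0 ≤ n - m - (1 - u) * t := by nlinarith
  have hq : 0 ≤ decayRatio β u := (decayRatio_pos hβ hβu hu).le
  have key : (1 - u) * t * (m - u * t) ≤ decayRatio β u * (u * t * (n - m - (1 - u) * t)) := by
    rw [decayRatio, div_mul_eq_mul_div, le_div_iff₀ (mul_pos hu0 (by linarith))]
    have h : (1 - β) * (m - u * t) ≤ β * (n - m - (1 - u) * t) := by nlinarith
    nlinarith [mul_le_mul_of_nonneg_left h (mul_nonneg (mul_nonneg (sub_nonneg.2 hu.le) hu0.le) ht)]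
  calc (t - j) * (m - j) ≤ (1 - u) * t * (m - u * t) :=
        mul_le_mul (by linarith) (by linarith) (by linarith) (by nlinarith)
    _ ≤ decayRatio β u * (u * t * (n - m - (1 - u) * t)) := key
    _ ≤ decayRatio β u * ((j + 1) * (n - t - (m - j - 1))) :=
        mul_le_mul_of_nonneg_left
          (mul_le_mul (by linarith) (by linarith) hD (by linarith [mul_nonneg hu0.le ht])) hq

end decayRatio

section decay

variable {β u : ℝ} (hβ : 0 < β) (hβu : β < u) (hu : u < 1)
  {n m t : ℕ} (ht : t ≤ n) (hm : (m : ℝ) ≤ β * n)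
include hβ hβu hu ht hm

lemma choose_mul_choose_succ_le_decayRatio {j : ℕ} (hj : u * t ≤ j) (hjm : j < m) :
    (t.choose (j + 1) * (n - t).choose (m - (j + 1)) : ℝ)
      ≤ decayRatio β u * (t.choose j * (n - t).choose (m - j)) := by
  have hK : m - (j + 1) + 1 = m - j := by omega
  rw [← hK]
  refine choose_succ_mul_choose_le (decayRatio_pos hβ hβu hu).le ?_
  have hcast : ((m - (j + 1) : ℕ) : ℝ) = m - j - 1 := by
    rw [Nat.cast_sub hjm]; push_cast; ring
  rw [hcast, Nat.cast_sub ht]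
  convert sub_mul_sub_le_decayRatio_mul hβ hβu hu (Nat.cast_nonneg t) (Nat.cast_le.2 ht) hm hj
    (by exact_mod_cast hjm) using 1
  ring

lemma choose_mul_choose_le_pow_mul {j : ℕ} (hj : ⌈u * t⌉₊ ≤ j) (hjm : j ≤ m) :
    (t.choose j * (n - t).choose (m - j) : ℝ)
      ≤ decayRatio β u ^ (j - ⌈u * t⌉₊) * n.choose m := by
  set j₀ := ⌈u * t⌉₊
  obtain ⟨d, rfl⟩ := Nat.exists_eq_add_of_le hj
  rw [Nat.add_sub_cancel_left]
  have hbase : (t.choose j₀ * (n - t).choose (m - j₀) : ℝ) ≤ n.choose m := by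
    exact_mod_cast choose_mul_choose_le_choose ht (by omega)
  have hq := (decayRatio_pos hβ hβu hu).le
  calc (t.choose (j₀ + d) * (n - t).choose (m - (j₀ + d)) : ℝ)
      ≤ decayRatio β u ^ d * (t.choose (j₀ + 0) * (n - t).choose (m - (j₀ + 0))) := by
        refine le_geom (u := fun i => (t.choose (j₀ + i) * (n - t).choose (m - (j₀ + i)) : ℝ))
          hq d fun i hi => ?_
        have hji : u * t ≤ (j₀ + i : ℕ) :=
          (Nat.le_ceil _).trans (by exact_mod_cast Nat.le_add_right j₀ i)
        simpa only [add_assoc] using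
          choose_mul_choose_succ_le_decayRatio hβ hβu hu ht hm hji (by omega)
    _ ≤ decayRatio β u ^ d * n.choose m := by rw [add_zero]; gcongr

lemma sum_choose_mul_choose_le {k : ℕ} (hk : ⌈u * t⌉₊ ≤ k) :
    ∑ j ∈ Icc k m, (t.choose j * (n - t).choose (m - j) : ℝ)
      ≤ decayRatio β u ^ (k - ⌈u * t⌉₊) / (1 - decayRatio β u) * n.choose m := by
  set q := decayRatio β u
  have hq0 : 0 < q := decayRatio_pos hβ hβu hu
  calc ∑ j ∈ Icc k m, (t.choose j * (n - t).choose (m - j) : ℝ)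
      ≤ ∑ j ∈ Ico k (m + 1), q ^ j / q ^ ⌈u * t⌉₊ * n.choose m := by
        rw [← Ico_add_one_right_eq_Icc]
        refine sum_le_sum fun j hj => ?_
        rw [mem_Ico] at hj
        rw [div_eq_mul_inv, ← pow_sub₀ _ hq0.ne' (hk.trans hj.1)]
        exact choose_mul_choose_le_pow_mul hβ hβu hu ht hm (hk.trans hj.1) (by omega)
    _ = (∑ j ∈ Ico k (m + 1), q ^ j) / q ^ ⌈u * t⌉₊ * n.choose m := by
        rw [← sum_mul, sum_div]
    _ ≤ q ^ k / (1 - q) / q ^ ⌈u * t⌉₊ * n.choose m := by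
        gcongr
        exact geom_sum_Ico_le_of_lt_one hq0.le (decayRatio_lt_one hβ hβu hu)
    _ = q ^ (k - ⌈u * t⌉₊) / (1 - q) * n.choose m := by
        rw [pow_sub₀ _ hq0.ne' hk]; ring

end decay

lemma pow_ceil_sub_ceil_le {q x y : ℝ} (hq0 : 0 < q) (hq1 : q ≤ 1) (hy : 0 ≤ y) (hyx : y ≤ x) :
    q ^ (⌈x⌉₊ - ⌈y⌉₊) ≤ q ^ (x - y - 1) := by
  rw [← Real.rpow_natCast]
  refine Real.rpow_le_rpow_of_exponent_ge hq0 hq1 ?_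
  rw [Nat.cast_sub (Nat.ceil_mono hyx)]
  linarith [Nat.le_ceil x, Nat.ceil_lt_add_one hy]

section ballot

variable {β u v : ℝ} (hβ : 0 < β) (hβu : β < u) (huv : u < v) (hv : v < 1)
  {n m : ℕ} (hm : (m : ℝ) ≤ β * n)
include hβ hβu huv hv hm

lemma sum_choose_mul_choose_ceil_le {t : ℕ} (ht : t ≤ n) (A : ℕ) :
    ∑ j ∈ Icc ⌈A + v * t⌉₊ m, (t.choose j * (n - t).choose (m - j) : ℝ)
      ≤ decayRatio β u ^ ((A : ℝ) - 1) * (decayRatio β u ^ (v - u)) ^ t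
          / (1 - decayRatio β u) * n.choose m := by
  have hu : u < 1 := huv.trans hv
  have hq0 := decayRatio_pos hβ hβu hu
  have hut : 0 ≤ u * t := mul_nonneg (hβ.trans hβu).le t.cast_nonneg
  have hle : u * t ≤ A + v * t := by
    nlinarith [A.cast_nonneg (α := ℝ), (t.cast_nonneg : (0 : ℝ) ≤ t), huv.le]
  refine (sum_choose_mul_choose_le hβ hβu hu ht hm (Nat.ceil_mono hle)).trans ?_
  gcongr
  · exact (sub_pos.2 (decayRatio_lt_one hβ hβu hu)).le
  refine (pow_ceil_sub_ceil_le hq0 (decayRatio_lt_one hβ hβu hu).le hut hle).trans_eq ?_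
  rw [← Real.rpow_natCast, ← Real.rpow_mul hq0.le, ← Real.rpow_add hq0]
  congr 1
  ring

lemma card_exists_partialOnes_ge_le_mul_choose (A : ℕ) :
    (#{ξ : Fin n → Bool | partialOnes ξ n = m ∧
        ∃ t, 1 ≤ t ∧ t ≤ n ∧ (A : ℝ) + v * t ≤ partialOnes ξ t} : ℝ)
      ≤ decayRatio β u ^ ((A : ℝ) - 1)
          / ((1 - decayRatio β u) * (1 - decayRatio β u ^ (v - u))) * n.choose m := by
  have hu : u < 1 := huv.trans hv
  set q := decayRatio β u
  set θ := q ^ (v - u)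
  have hq0 : 0 < q := decayRatio_pos hβ hβu hu
  have h1q : 0 < 1 - q := sub_pos.2 (decayRatio_lt_one hβ hβu hu)
  have hθ1 : θ < 1 := Real.rpow_lt_one hq0.le (decayRatio_lt_one hβ hβu hu) (sub_pos.2 huv)
  have h1θ : 0 < 1 - θ := sub_pos.2 hθ1
  have hgeom : ∑ t ∈ Icc 1 n, θ ^ t ≤ 1 / (1 - θ) := by
    rw [← Ico_add_one_right_eq_Icc]
    refine (geom_sum_Ico_le_of_lt_one (Real.rpow_pos_of_pos hq0 _).le hθ1).trans ?_
    gcongr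
    simpa using hθ1.le
  calc (#{ξ : Fin n → Bool | partialOnes ξ n = m ∧
        ∃ t, 1 ≤ t ∧ t ≤ n ∧ (A : ℝ) + v * t ≤ partialOnes ξ t} : ℝ)
      ≤ ∑ t ∈ Icc 1 n, ∑ j ∈ Icc ⌈A + v * t⌉₊ m, (t.choose j * (n - t).choose (m - j) : ℝ) := by
        exact_mod_cast card_exists_partialOnes_ge_le n m fun t => A + v * t
    _ ≤ ∑ t ∈ Icc 1 n, q ^ ((A : ℝ) - 1) / (1 - q) * n.choose m * θ ^ t :=
        sum_le_sum fun t ht =>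
          (sum_choose_mul_choose_ceil_le hβ hβu huv hv hm (mem_Icc.1 ht).2 A).trans_eq (by ring)
    _ ≤ q ^ ((A : ℝ) - 1) / (1 - q) * n.choose m * (1 / (1 - θ)) := by
        rw [← mul_sum]
        gcongr
    _ = _ := by field_simp

end ballot

/-- Let `0 < β < v < 1`.  Then there exist a positive integer `A`
and `n₀` such that for every `n ≥ n₀`, with `m = ⌊βn⌋` and `(ξ_1,…,ξ_n)`
uniformly distributed over all 0-1 sequences of length `n` with exactly `m`
ones, one has `P[∃ 1 ≤ t ≤ n, Σ_{s=1}^t ξ_s ≥ A + v·t] ≤ 1/2`.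
(The uniform probability is expressed by counting: twice the number of bad
sequences is at most the total number of sequences.) -/
theorem uniform_ballot_bound (β v : ℝ) (hβ : 0 < β) (hβv : β < v) (hv : v < 1) :
    ∃ A : ℕ, 0 < A ∧ ∃ n₀ : ℕ, ∀ n : ℕ, n₀ ≤ n →
      2 * ((Finset.univ.filter (fun ξ : Fin n → Bool =>
              partialOnes ξ n = ⌊β * n⌋₊ ∧
              ∃ t : ℕ, 1 ≤ t ∧ t ≤ n ∧ (A : ℝ) + v * t ≤ (partialOnes ξ t : ℝ))).card)
        ≤ (Finset.univ.filter (fun ξ : Fin n → Bool =>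
              partialOnes ξ n = ⌊β * n⌋₊)).card := by
  obtain ⟨u, hβu, huv⟩ := exists_between hβv
  have hu : u < 1 := huv.trans hv
  set q := decayRatio β u with hq
  have hq1 : q < 1 := decayRatio_lt_one hβ hβu hu
  have hθ1 : q ^ (v - u) < 1 :=
    Real.rpow_lt_one (decayRatio_pos hβ hβu hu).le hq1 (sub_pos.2 huv)
  have hε : 0 < (1 - q) * (1 - q ^ (v - u)) / 2 := by
    have := sub_pos.2 hq1; have := sub_pos.2 hθ1; positivity
  obtain ⟨B, hB⟩ := exists_pow_lt_of_lt_one hε hq1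
  refine ⟨B + 1, B.succ_pos, 0, fun n _ => ?_⟩
  have hbad := card_exists_partialOnes_ge_le_mul_choose hβ hβu huv hv
    (Nat.floor_le (by positivity) : (⌊β * n⌋₊ : ℝ) ≤ β * n) (B + 1)
  rw [← hq, show ((B + 1 : ℕ) : ℝ) - 1 = B by push_cast; ring, Real.rpow_natCast] at hbad
  have hsmall : q ^ B / ((1 - q) * (1 - q ^ (v - u))) ≤ 1 / 2 := by
    rw [div_le_iff₀ (by linarith)]; linarith
  rw [card_partialOnes_self_eq]
  have hC : (0 : ℝ) ≤ n.choose ⌊β * n⌋₊ := Nat.cast_nonneg _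
  rw [← Nat.cast_le (α := ℝ), Nat.cast_mul, Nat.cast_two]
  linarith [mul_le_mul_of_nonneg_right hsmall hC]
end
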